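/- arXiv:2405.19170 — 2 statements merged into one kernel-verified Lean document; each statement's English description precedes it below -/
import Mathlib

section
/- For every ε > 0 and every d ∈ ℕ, the Gaussian kernel k(x, x') = exp(−ε² ‖x − x'‖²) on ℝ^d is strictly positive definite: for every N ∈ ℕ and all pairwise distinct points x_1, …, x_N ∈ ℝ^d, the matrix (exp(−ε² ‖x_i − x_j‖²))_{i,j=1}^N is symmetric positive definite. -/
/-!
Since `‖a - b‖² = ‖a‖² - 2⟪a, b⟫ + ‖b‖²`, the Gaussian kernel matrix is `D E D` with `D` a positive
diagonal matrix and `E = (exp (2ε² ⟪xᵢ, xⱼ⟫))ᵢⱼ`. Expanding the exponential,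
`vᵀ E v = ∑ₙ (2ε²)ⁿ / n! · ‖∑ᵢ vᵢ xᵢ^⊗n‖²`, a series of nonnegative terms. If they all vanished,
pairing with `y^⊗n` would give `∑ᵢ vᵢ ⟪xᵢ, y⟫ⁿ = 0` for every `n`; for a `y` making the numbers
`⟪xᵢ, y⟫` distinct, invertibility of the Vandermonde matrix then forces `v = 0`.
-/

open Finset Matrix

namespace Matrix

variable {K R ι κ : Type*} [Fintype ι]

theorem exists_injective_dotProduct [Field K] [Infinite K] [Finite κ] {x : κ → ι → K}
    (hx : Function.Injective x) : ∃ y : ι → K, Function.Injective fun i => x i ⬝ᵥ y := by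
  by_contra! h
  let kernel (q : {q : κ × κ // q.1 ≠ q.2}) : Subspace K (ι → K) :=
    LinearMap.ker (dotProductBilin K K (x q.1.1 - x q.1.2))
  have hcover : ⋃ q, (kernel q : Set (ι → K)) = Set.univ := by
    refine Set.eq_univ_of_forall fun y => ?_
    obtain ⟨i, j, hij, hne⟩ := Function.not_injective_iff.mp (h y)
    exact Set.mem_iUnion.mpr ⟨⟨(i, j), hne⟩, by simp [kernel, hij]⟩
  obtain ⟨⟨⟨i, j⟩, hne⟩, htop⟩ := Subspace.exists_eq_top_of_iUnion_eq_univ hcover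
  refine hne (hx (sub_eq_zero.mp (dotProduct_eq_zero _ fun y => ?_)))
  simpa [kernel] using htop.ge (Submodule.mem_top (x := y))

section TensorPower

variable [CommSemiring R]

def tensorPowerCoords (n : ℕ) (a : ι → R) : (Fin n → ι) → R :=
  fun f => ∏ m, a (f m)

theorem dotProduct_pow (a b : ι → R) (n : ℕ) :
    (a ⬝ᵥ b) ^ n = tensorPowerCoords n a ⬝ᵥ tensorPowerCoords n b := by
  simp only [dotProduct, sum_pow', Fintype.piFinset_univ, tensorPowerCoords,
    ← prod_mul_distrib]

theorem sum_sum_mul_mul_dotProduct_pow [Fintype κ] (v : κ → R) (x : κ → ι → R) (n : ℕ) :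
    ∑ i, ∑ j, v i * v j * (x i ⬝ᵥ x j) ^ n =
      (∑ i, v i • tensorPowerCoords n (x i)) ⬝ᵥ ∑ j, v j • tensorPowerCoords n (x j) := by
  simp only [dotProduct_pow, sum_dotProduct, dotProduct_sum, smul_dotProduct, dotProduct_smul,
    smul_eq_mul, mul_sum]
  exact sum_congr rfl fun i _ => sum_congr rfl fun j _ => by rw [dotProduct_comm, mul_assoc]

end TensorPower

theorem exists_sum_smul_tensorPowerCoords_ne_zero [Field K] [Infinite K] {N : ℕ}
    {x : Fin N → ι → K} (hx : Function.Injective x) {v : Fin N → K} (hv : v ≠ 0) :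
    ∃ n, ∑ i, v i • tensorPowerCoords n (x i) ≠ 0 := by
  by_contra! h
  obtain ⟨y, hy⟩ := exists_injective_dotProduct hx
  refine hv (eq_zero_of_forall_pow_sum_mul_pow_eq_zero hy fun n => ?_)
  calc ∑ i, v i * (x i ⬝ᵥ y) ^ (n : ℕ)
      = (∑ i, v i • tensorPowerCoords n (x i)) ⬝ᵥ tensorPowerCoords n y := by
        simp only [dotProduct_pow, sum_dotProduct, smul_dotProduct, smul_eq_mul]
    _ = 0 := by rw [h, zero_dotProduct]

theorem hasSum_star_dotProduct_exp_mulVec [Fintype κ] (x : κ → ι → ℝ) (c : ℝ) (v : κ → ℝ) :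
    HasSum (fun n => c ^ n / n.factorial *
        ((∑ i, v i • tensorPowerCoords n (x i)) ⬝ᵥ ∑ i, v i • tensorPowerCoords n (x i)))
      (star v ⬝ᵥ (of fun i j => Real.exp (c * (x i ⬝ᵥ x j))) *ᵥ v) := by
  have hexp (t : ℝ) : HasSum (fun n => t ^ n / n.factorial) (Real.exp t) := by
    rw [Real.exp_eq_exp_ℝ]
    exact NormedSpace.expSeries_div_hasSum_exp t
  have hquad : star v ⬝ᵥ (of fun i j => Real.exp (c * (x i ⬝ᵥ x j))) *ᵥ v =
      ∑ i, ∑ j, v i * v j * Real.exp (c * (x i ⬝ᵥ x j)) := by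
    simp only [dotProduct, mulVec, star_trivial, of_apply, mul_sum]
    exact sum_congr rfl fun i _ => sum_congr rfl fun j _ => by ring
  have hterm (n : ℕ) : ∑ i, ∑ j, v i * v j * ((c * (x i ⬝ᵥ x j)) ^ n / n.factorial) =
      c ^ n / n.factorial *
        ((∑ i, v i • tensorPowerCoords n (x i)) ⬝ᵥ ∑ i, v i • tensorPowerCoords n (x i)) := by
    simp only [← sum_sum_mul_mul_dotProduct_pow, mul_sum]
    exact sum_congr rfl fun i _ => sum_congr rfl fun j _ => by ring
  rw [hquad, ← funext hterm]
  exact hasSum_sum fun i _ => hasSum_sum fun j _ => (hexp (c * (x i ⬝ᵥ x j))).mul_left (v i * v j)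

theorem posDef_exp_mul_dotProduct {N : ℕ} {x : Fin N → ι → ℝ} (hx : Function.Injective x)
    {c : ℝ} (hc : 0 < c) : (of fun i j => Real.exp (c * (x i ⬝ᵥ x j))).PosDef := by
  refine PosDef.of_dotProduct_mulVec_pos ?_ fun v hv => ?_
  · ext i j
    simp [dotProduct_comm]
  obtain ⟨n, hn⟩ := exists_sum_smul_tensorPowerCoords_ne_zero hx hv
  refine hasSum_lt (f := 0) (i := n) (fun m => ?_) ?_ hasSum_zero
    (hasSum_star_dotProduct_exp_mulVec x c v)
  · exact mul_nonneg (by positivity) (dotProduct_self_star_nonneg _)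
  · exact mul_pos (by positivity) (dotProduct_self_star_pos_iff.mpr hn)

end Matrix

theorem Real.exp_neg_mul_norm_sub_sq {E : Type*} [NormedAddCommGroup E] [InnerProductSpace ℝ E]
    (c : ℝ) (a b : E) :
    Real.exp (-c * ‖a - b‖ ^ 2) =
      Real.exp (-c * ‖a‖ ^ 2) * Real.exp (2 * c * inner ℝ a b) * Real.exp (-c * ‖b‖ ^ 2) := by
  rw [← Real.exp_add, ← Real.exp_add, norm_sub_sq_real]
  ring_nf

/-- The Gaussian kernel `k(x,x') = exp(-ε² ‖x - x'‖²)` on `ℝ^d` is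
strictly positive definite: for all `N` and pairwise distinct points `x_1, …, x_N`,
the kernel matrix is (symmetric) positive definite. -/
theorem gaussian_kernel_strictly_positive_definite
    (ε : ℝ) (hε : 0 < ε) (d N : ℕ)
    (x : Fin N → EuclideanSpace ℝ (Fin d)) (hinj : Function.Injective x) :
    (Matrix.of fun i j => Real.exp (-(ε ^ 2) * ‖x i - x j‖ ^ 2)).PosDef := by
  set D : Matrix (Fin N) (Fin N) ℝ := diagonal fun i => Real.exp (-(ε ^ 2) * ‖x i‖ ^ 2)
  have hfactor : (of fun i j => Real.exp (-(ε ^ 2) * ‖x i - x j‖ ^ 2)) =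
      star D * (of fun i j => Real.exp (2 * ε ^ 2 * ((x i).ofLp ⬝ᵥ (x j).ofLp))) * D := by
    ext i j
    rw [of_apply, Real.exp_neg_mul_norm_sub_sq, EuclideanSpace.inner_eq_star_dotProduct]
    simp [D, star_eq_conjTranspose, diagonal_mul, mul_diagonal, dotProduct_comm]
  rw [hfactor, IsUnit.posDef_star_left_conjugate_iff (isUnit_diagonal.mpr ?_)]
  · exact posDef_exp_mul_dotProduct ((WithLp.ofLp_injective 2).comp hinj) (by positivity)
  · exact Pi.isUnit_iff.mpr fun i => (Real.exp_pos _).ne'.isUnit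
end

section
/- For every ε > 0 and every d ∈ ℕ, the Matérn 1 kernel k(x, x') = (1 + ε ‖x − x'‖) exp(−ε ‖x − x'‖) on ℝ^d is strictly positive definite: for every N ∈ ℕ and all pairwise distinct points x_1, …, x_N ∈ ℝ^d, the matrix ((1 + ε ‖x_i − x_j‖) exp(−ε ‖x_i − x_j‖))_{i,j=1}^N is symmetric positive definite. -/
/-!
The Matérn kernel is a scale mixture of Gaussian kernels: for `t ≥ 0`,
`(1 + t) e^{-t} = (4 / √π) ∫_0^∞ v² e^{-v²} e^{-t² / (4 v²)} dv`.
Every Gaussian kernel `e^{-a ‖x - y‖²}` is strictly positive definite: by its Fourier transform,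
its quadratic form is a positive multiple of `∫ e^{-‖ξ‖²} |∑ⱼ cⱼ e^{i⟪xⱼ, ξ⟫}|² dξ`, and the
integrand does not vanish identically because characters of distinct points are linearly
independent (Dedekind). Integrating over `v` keeps strict positivity.

The mixture identity rests on `∫_0^∞ e^{-v² - b²/v²} dv = (√π / 2) e^{-2b}`, obtained from the
Cauchy–Schlömilch substitution `w = v - b/v` together with the symmetry `v ↦ b/v`; the second
moment then follows by integrating the derivative of `v e^{-v² - b²/v²}` over `(0, ∞)`.
-/

open Real Set MeasureTheory Filter Topology

section Substitution

variable {F : Type*} [NormedAddCommGroup F] [NormedSpace ℝ F]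

lemma hasDerivAt_const_div (b : ℝ) {v : ℝ} (hv : v ≠ 0) :
    HasDerivAt (fun v => b / v) (-(b / v ^ 2)) v := by
  simpa [div_eq_mul_inv, neg_div] using (hasDerivAt_inv hv).const_mul b

theorem integral_Ioi_div_sq_smul_comp_div {b : ℝ} (hb : 0 < b) (g : ℝ → F) :
    ∫ v in Ioi 0, (b / v ^ 2) • g (b / v) = ∫ v in Ioi 0, g v := by
  have himage : (fun v => b / v) '' Ioi 0 = Ioi 0 := by
    refine Subset.antisymm (image_subset_iff.mpr fun v hv => div_pos hb hv) fun y hy => ?_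
    exact ⟨b / y, div_pos hb hy, div_div_cancel₀ hb.ne'⟩
  have hinj : InjOn (fun v => b / v) (Ioi 0) := fun v _ w _ h =>
    inv_injective (by simpa [div_eq_mul_inv, hb.ne'] using h)
  conv_rhs => rw [← himage, integral_image_eq_integral_abs_deriv_smul measurableSet_Ioi
    (fun v hv => (hasDerivAt_const_div b (ne_of_gt hv)).hasDerivWithinAt) hinj]
  refine setIntegral_congr_fun measurableSet_Ioi fun v hv => ?_
  rw [abs_neg, abs_of_pos (div_pos hb (pow_pos hv 2))]

theorem integral_Ioi_one_add_div_sq_smul_comp_sub_div {b : ℝ} (hb : 0 < b) (g : ℝ → F) :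
    ∫ v in Ioi 0, (1 + b / v ^ 2) • g (v - b / v) = ∫ v, g v := by
  have himage : (fun v => v - b / v) '' Ioi 0 = univ := by
    refine eq_univ_of_forall fun y => ?_
    set s := √(y ^ 2 + 4 * b)
    have hs : s ^ 2 = y ^ 2 + 4 * b := sq_sqrt (by positivity)
    have hys : |y| < s := by
      rw [← sqrt_sq_eq_abs]
      exact sqrt_lt_sqrt (sq_nonneg y) (by linarith)
    have hv : 0 < (y + s) / 2 := by linarith [neg_abs_le y]
    refine ⟨(y + s) / 2, hv, ?_⟩
    have : y + s ≠ 0 := (by linarith : 0 < y + s).ne'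
    field_simp
    linear_combination hs
  have hinj : InjOn (fun v => v - b / v) (Ioi 0) := by
    intro v (hv : 0 < v) w (hw : 0 < w) h
    have : (v - w) * (v * w + b) = 0 := by
      field_simp at h
      linear_combination h
    rcases mul_eq_zero.mp this with h | h
    · linarith
    · nlinarith [mul_pos hv hw]
  have hderiv : ∀ v ∈ Ioi (0 : ℝ),
      HasDerivWithinAt (fun v => v - b / v) (1 + b / v ^ 2) (Ioi 0) v :=
    fun v hv => (((hasDerivAt_id' v).sub (hasDerivAt_const_div b (ne_of_gt hv))).congr_deriv
      (sub_neg_eq_add 1 _)).hasDerivWithinAt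
  conv_rhs => rw [← setIntegral_univ, ← himage,
    integral_image_eq_integral_abs_deriv_smul measurableSet_Ioi hderiv hinj]
  refine setIntegral_congr_fun measurableSet_Ioi fun v hv => ?_
  rw [abs_of_pos (by have := hv.out; positivity)]

end Substitution

lemma exp_neg_sq_sub_div_sq_le (b v : ℝ) : rexp (-v ^ 2 - (b / v) ^ 2) ≤ rexp (-v ^ 2) :=
  exp_le_exp.mpr (by linarith [sq_nonneg (b / v)])

lemma integrable_exp_neg_sq_sub_div_sq (b : ℝ) :
    Integrable fun v => rexp (-v ^ 2 - (b / v) ^ 2) := by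
  refine (integrable_exp_neg_mul_sq one_pos).mono' (by fun_prop) (ae_of_all _ fun v => ?_)
  simpa [norm_of_nonneg (exp_pos _).le] using exp_neg_sq_sub_div_sq_le b v

lemma integrable_sq_mul_exp_neg_sq_sub_div_sq (b : ℝ) :
    Integrable fun v => v ^ 2 * rexp (-v ^ 2 - (b / v) ^ 2) := by
  have h := integrable_rpow_mul_exp_neg_mul_sq one_pos (by norm_num : (-1 : ℝ) < 2)
  simp only [rpow_two, neg_mul, one_mul] at h
  refine h.mono' (by fun_prop) (ae_of_all _ fun v => ?_)
  rw [norm_of_nonneg (by positivity)]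
  exact mul_le_mul_of_nonneg_left (exp_neg_sq_sub_div_sq_le b v) (sq_nonneg v)

lemma integrable_div_sq_mul_exp_neg_sq_sub_div_sq (b : ℝ) :
    Integrable fun v => (b / v) ^ 2 * rexp (-v ^ 2 - (b / v) ^ 2) := by
  refine (integrable_exp_neg_mul_sq one_pos).mono' (by fun_prop) (ae_of_all _ fun v => ?_)
  rw [norm_of_nonneg (by positivity), sub_eq_add_neg, exp_add, mul_left_comm]
  calc rexp (-v ^ 2) * ((b / v) ^ 2 * rexp (-(b / v) ^ 2)) ≤ rexp (-v ^ 2) * 1 := by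
        gcongr
        exact (mul_exp_neg_le_exp_neg_one _).trans (exp_le_one_iff.mpr (by norm_num))
    _ = rexp (-1 * v ^ 2) := by simp

lemma integral_div_sq_mul_exp_neg_sq_sub_div_sq {b : ℝ} (hb : 0 ≤ b) :
    ∫ v in Ioi 0, (b / v) ^ 2 * rexp (-v ^ 2 - (b / v) ^ 2)
      = b * ∫ v in Ioi 0, rexp (-v ^ 2 - (b / v) ^ 2) := by
  rcases hb.eq_or_lt with rfl | hb
  · simp
  rw [← integral_Ioi_div_sq_smul_comp_div hb, ← integral_const_mul]
  refine setIntegral_congr_fun measurableSet_Ioi fun v (hv : 0 < v) => ?_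
  rw [smul_eq_mul, div_div_cancel₀ hb.ne', neg_sub_comm]
  field_simp

theorem integral_exp_neg_sq_sub_div_sq {b : ℝ} (hb : 0 ≤ b) :
    ∫ v in Ioi 0, rexp (-v ^ 2 - (b / v) ^ 2) = √π / 2 * rexp (-(2 * b)) := by
  rcases hb.eq_or_lt with rfl | hb
  · simpa using integral_gaussian_Ioi 1
  have hcs : ∫ v in Ioi 0, (1 + b / v ^ 2) * rexp (-v ^ 2 - (b / v) ^ 2)
      = √π * rexp (-(2 * b)) := by
    have hg := integral_Ioi_one_add_div_sq_smul_comp_sub_div hb fun w => rexp (-w ^ 2)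
    rw [show ∫ w, rexp (-w ^ 2) = √π by simpa using integral_gaussian 1] at hg
    rw [← hg, ← integral_mul_const]
    refine setIntegral_congr_fun measurableSet_Ioi fun v (hv : 0 < v) => ?_
    rw [smul_eq_mul, mul_assoc, ← exp_add]
    congr 2
    field_simp
    ring
  have hsplit : ∫ v in Ioi 0, (1 + b / v ^ 2) * rexp (-v ^ 2 - (b / v) ^ 2)
      = (∫ v in Ioi 0, rexp (-v ^ 2 - (b / v) ^ 2))
        + b⁻¹ * ∫ v in Ioi 0, (b / v) ^ 2 * rexp (-v ^ 2 - (b / v) ^ 2) := by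
    calc _ = ∫ v in Ioi 0, rexp (-v ^ 2 - (b / v) ^ 2)
          + b⁻¹ * ((b / v) ^ 2 * rexp (-v ^ 2 - (b / v) ^ 2)) :=
          setIntegral_congr_fun measurableSet_Ioi fun v (hv : 0 < v) => by field_simp
      _ = _ := by
          rw [integral_add (integrable_exp_neg_sq_sub_div_sq b).integrableOn
            ((integrable_div_sq_mul_exp_neg_sq_sub_div_sq b).integrableOn.const_mul _),
            integral_const_mul]
  rw [integral_div_sq_mul_exp_neg_sq_sub_div_sq hb.le, inv_mul_cancel_left₀ hb.ne'] at hsplit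
  linarith

lemma hasDerivAt_mul_exp_neg_sq_sub_div_sq (b : ℝ) {v : ℝ} (hv : v ≠ 0) :
    HasDerivAt (fun v => v * rexp (-v ^ 2 - (b / v) ^ 2))
      ((1 - 2 * v ^ 2 + 2 * (b / v) ^ 2) * rexp (-v ^ 2 - (b / v) ^ 2)) v := by
  have hexp : HasDerivAt (fun v => -v ^ 2 - (b / v) ^ 2) _ v :=
    (hasDerivAt_pow 2 v).neg.sub ((hasDerivAt_const_div b hv).pow 2)
  have h : HasDerivAt (fun v => v * rexp (-v ^ 2 - (b / v) ^ 2)) _ v :=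
    (hasDerivAt_id' v).mul hexp.exp
  refine h.congr_deriv ?_
  push_cast
  field_simp
  ring

lemma tendsto_mul_exp_neg_sq_sub_div_sq_atTop (b : ℝ) :
    Tendsto (fun v => v * rexp (-v ^ 2 - (b / v) ^ 2)) atTop (𝓝 0) := by
  refine squeeze_zero_norm' ?_ (by simpa using tendsto_pow_mul_exp_neg_atTop_nhds_zero 1)
  filter_upwards [eventually_ge_atTop 1] with v hv
  rw [norm_of_nonneg (by positivity)]
  gcongr
  nlinarith [sq_nonneg (b / v)]

lemma continuousAt_mul_exp_neg_sq_sub_div_sq_zero (b : ℝ) :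
    ContinuousAt (fun v => v * rexp (-v ^ 2 - (b / v) ^ 2)) 0 := by
  refine (squeeze_zero_norm (fun v => ?_) tendsto_norm_zero).trans (by simp)
  rw [norm_mul, norm_of_nonneg (exp_pos _).le]
  exact mul_le_of_le_one_right (norm_nonneg v)
    (exp_le_one_iff.mpr (by nlinarith [sq_nonneg (b / v)]))

theorem integral_sq_mul_exp_neg_sq_sub_div_sq {b : ℝ} (hb : 0 ≤ b) :
    ∫ v in Ioi 0, v ^ 2 * rexp (-v ^ 2 - (b / v) ^ 2)
      = √π / 4 * (1 + 2 * b) * rexp (-(2 * b)) := by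
  have hE := (integrable_exp_neg_sq_sub_div_sq b).integrableOn (s := Ioi 0)
  have hJ := (integrable_sq_mul_exp_neg_sq_sub_div_sq b).integrableOn (s := Ioi 0)
  have hK := (integrable_div_sq_mul_exp_neg_sq_sub_div_sq b).integrableOn (s := Ioi 0)
  have hEJ : IntegrableOn (fun v => rexp (-v ^ 2 - (b / v) ^ 2)
      - 2 * (v ^ 2 * rexp (-v ^ 2 - (b / v) ^ 2))) (Ioi 0) := hE.sub (hJ.const_mul 2)
  have hftc := integral_Ioi_of_hasDerivAt_of_tendsto
    (continuousAt_mul_exp_neg_sq_sub_div_sq_zero b).continuousWithinAt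
    (fun v hv => hasDerivAt_mul_exp_neg_sq_sub_div_sq b (ne_of_gt hv))
    ((hEJ.add (hK.const_mul 2)).congr_fun (fun v _ => by simp only [Pi.add_apply]; ring)
      measurableSet_Ioi) (tendsto_mul_exp_neg_sq_sub_div_sq_atTop b)
  have hsplit : ∫ v in Ioi 0, (1 - 2 * v ^ 2 + 2 * (b / v) ^ 2) * rexp (-v ^ 2 - (b / v) ^ 2)
      = (∫ v in Ioi 0, rexp (-v ^ 2 - (b / v) ^ 2))
        - 2 * (∫ v in Ioi 0, v ^ 2 * rexp (-v ^ 2 - (b / v) ^ 2))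
        + 2 * ∫ v in Ioi 0, (b / v) ^ 2 * rexp (-v ^ 2 - (b / v) ^ 2) := by
    calc _ = ∫ v in Ioi 0, (rexp (-v ^ 2 - (b / v) ^ 2)
            - 2 * (v ^ 2 * rexp (-v ^ 2 - (b / v) ^ 2)))
            + 2 * ((b / v) ^ 2 * rexp (-v ^ 2 - (b / v) ^ 2)) := by
          congr 1 with v
          ring
      _ = _ := by
          rw [integral_add hEJ (hK.const_mul 2), integral_sub hE (hJ.const_mul 2),
            integral_const_mul, integral_const_mul]
  rw [hsplit, integral_div_sq_mul_exp_neg_sq_sub_div_sq hb, integral_exp_neg_sq_sub_div_sq hb]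
    at hftc
  rw [zero_mul, sub_zero] at hftc
  linarith

section Gaussian

open Complex
open scoped InnerProductSpace ComplexConjugate

variable {E : Type*} [NormedAddCommGroup E] [InnerProductSpace ℝ E]

noncomputable def expInnerChar (w : E) : Multiplicative E →* ℂ where
  toFun v := cexp (⟪w, v.toAdd⟫_ℝ * I)
  map_one' := by simp
  map_mul' u v := by simp [inner_add_right, add_mul, Complex.exp_add]

lemma expInnerChar_injective : Function.Injective (expInnerChar (E := E)) := by
  intro w w' h
  -- at `v = π (w - w') / ‖w - w'‖²` the two characters differ by the factor `e^{iπ} = -1`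
  by_contra hne
  have hu : w - w' ≠ 0 := sub_ne_zero.mpr hne
  set v := (π / ‖w - w'‖ ^ 2) • (w - w')
  have hval := DFunLike.congr_fun h (Multiplicative.ofAdd v)
  have hinner : ⟪w - w', v⟫_ℝ = π := by
    rw [inner_smul_right, real_inner_self_eq_norm_sq]
    field_simp
  have hsplit : ⟪w, v⟫_ℝ = π + ⟪w', v⟫_ℝ := by
    rw [← hinner, ← inner_add_left, sub_add_cancel]
  simp only [expInnerChar, MonoidHom.coe_mk, OneHom.coe_mk, toAdd_ofAdd, hsplit, ofReal_add,
    add_mul, Complex.exp_add, Complex.exp_pi_mul_I] at hval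
  have := Complex.exp_ne_zero (⟪w', v⟫_ℝ * I)
  have : (-1 : ℂ) = 1 := mul_right_cancel₀ this (by simpa using hval)
  norm_num at this

lemma eq_zero_of_forall_sum_mul_cexp_inner_eq_zero {ι : Type*} [Fintype ι] {x : ι → E}
    (hx : Function.Injective x) {c : ι → ℂ}
    (h : ∀ v : E, ∑ j, c j * cexp (⟪x j, v⟫_ℝ * I) = 0) : c = 0 := by
  have hli := (linearIndependent_monoidHom (Multiplicative E) ℂ).comp _
    (expInnerChar_injective.comp hx)
  funext j
  exact Fintype.linearIndependent_iff.mp hli c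
    (funext fun v => by simpa [expInnerChar] using h v.toAdd) j

variable {ι : Type*} [Fintype ι]

lemma ofReal_exp_neg_sq_norm_mul_norm_sum_sq (x : ι → E) (c : ι → ℝ) (v : E) :
    ((rexp (-‖v‖ ^ 2) * ‖∑ j, (c j : ℂ) * cexp (⟪x j, v⟫_ℝ * I)‖ ^ 2 : ℝ) : ℂ)
      = ∑ i, ∑ j, (c i * c j : ℂ) * cexp (-1 * ‖v‖ ^ 2 + I * ⟪x i - x j, v⟫_ℝ) := by
  rw [ofReal_mul, ofReal_pow, ← Complex.mul_conj', map_sum, Finset.sum_mul_sum, Finset.mul_sum]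
  refine Finset.sum_congr rfl fun i _ => ?_
  rw [Finset.mul_sum]
  refine Finset.sum_congr rfl fun j _ => ?_
  rw [map_mul, Complex.conj_ofReal, ← Complex.exp_conj, map_mul, Complex.conj_ofReal,
    Complex.conj_I, inner_sub_left, ofReal_sub, ofReal_exp]
  rw [show (-1 * (‖v‖ : ℂ) ^ 2 + I * (⟪x i, v⟫_ℝ - ⟪x j, v⟫_ℝ))
    = -‖v‖ ^ 2 + ⟪x i, v⟫_ℝ * I + ⟪x j, v⟫_ℝ * -I by ring, Complex.exp_add, Complex.exp_add]
  push_cast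
  ring

variable [FiniteDimensional ℝ E] [MeasurableSpace E] [BorelSpace E]

lemma integral_exp_neg_sq_norm_mul_norm_sum_sq (x : ι → E) (c : ι → ℝ) :
    ∫ v, rexp (-‖v‖ ^ 2) * ‖∑ j, (c j : ℂ) * cexp (⟪x j, v⟫_ℝ * I)‖ ^ 2
      = π ^ (Module.finrank ℝ E / 2 : ℝ) * ∑ i, ∑ j, c i * c j * rexp (-‖x i - x j‖ ^ 2 / 4) := by
  have hint : ∀ i j, Integrable fun v : E =>
      (c i * c j : ℂ) * cexp (-1 * ‖v‖ ^ 2 + I * ⟪x i - x j, v⟫_ℝ) :=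
    fun i j => (GaussianFourier.integrable_cexp_neg_mul_sq_norm_add (by simp) I _).const_mul _
  apply Complex.ofReal_injective
  rw [← integral_complex_ofReal]
  simp_rw [ofReal_exp_neg_sq_norm_mul_norm_sum_sq]
  rw [integral_finsetSum _ fun i _ => integrable_finsetSum _ fun j _ => hint i j]
  simp_rw [integral_finsetSum _ fun j _ => hint _ j, integral_const_mul,
    GaussianFourier.integral_cexp_neg_mul_sq_norm_add (by simp : (0:ℝ) < (1:ℂ).re)]
  rw [ofReal_mul, ofReal_cpow pi_pos.le]
  push_cast
  rw [Finset.mul_sum]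
  refine Finset.sum_congr rfl fun i _ => ?_
  rw [Finset.mul_sum]
  refine Finset.sum_congr rfl fun j _ => ?_
  simp only [div_one, I_sq, mul_one]
  ring_nf

lemma sum_mul_exp_neg_sq_norm_sub_div_four_pos {x : ι → E} (hx : Function.Injective x)
    {c : ι → ℝ} (hc : c ≠ 0) : 0 < ∑ i, ∑ j, c i * c j * rexp (-‖x i - x j‖ ^ 2 / 4) := by
  set F : E → ℝ := fun v => rexp (-‖v‖ ^ 2) * ‖∑ j, (c j : ℂ) * cexp (⟪x j, v⟫_ℝ * I)‖ ^ 2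
  have hF_cont : Continuous F := by fun_prop
  have hF_int : Integrable F := by
    have hG : Integrable fun v => (F v : ℂ) := by
      simp_rw [F, ofReal_exp_neg_sq_norm_mul_norm_sum_sq]
      exact integrable_finsetSum _ fun i _ => integrable_finsetSum _ fun j _ =>
        (GaussianFourier.integrable_cexp_neg_mul_sq_norm_add (by simp) I _).const_mul _
    simpa using hG.re
  have hF_ne : F ≠ 0 := by
    intro hF
    have hzero := eq_zero_of_forall_sum_mul_cexp_inner_eq_zero (c := fun j => (c j : ℂ)) hx
      fun v => ?_
    · exact hc (funext fun j => by simpa using congrFun hzero j)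
    simpa [F, (Real.exp_pos _).ne'] using congrFun hF v
  have hF_pos : 0 < ∫ v, F v := by
    rw [integral_pos_iff_support_of_nonneg (fun v => by positivity) hF_int]
    exact hF_cont.isOpen_support.measure_pos _ (Function.support_nonempty_iff.mpr hF_ne)
  have hpi : 0 < π ^ (Module.finrank ℝ E / 2 : ℝ) := by positivity
  rw [integral_exp_neg_sq_norm_mul_norm_sum_sq] at hF_pos
  exact pos_of_mul_pos_right hF_pos hpi.le

theorem sum_mul_exp_neg_mul_sq_norm_sub_pos {x : ι → E} (hx : Function.Injective x)
    {a : ℝ} (ha : 0 < a) {c : ι → ℝ} (hc : c ≠ 0) :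
    0 < ∑ i, ∑ j, c i * c j * rexp (-(a * ‖x i - x j‖ ^ 2)) := by
  have hs : (2 * √a) ≠ 0 := by positivity
  convert sum_mul_exp_neg_sq_norm_sub_div_four_pos ((smul_right_injective E hs).comp hx) hc
    using 6 with i _ j _
  simp only [Function.comp_apply, ← smul_sub, norm_smul, mul_pow, Real.norm_eq_abs, sq_abs,
    Real.sq_sqrt ha.le]
  ring

end Gaussian

theorem one_add_mul_exp_neg_eq_integral {t : ℝ} (ht : 0 ≤ t) :
    (1 + t) * rexp (-t) = 4 / √π * ∫ v in Ioi 0, v ^ 2 * rexp (-v ^ 2 - (t / 2 / v) ^ 2) := by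
  rw [integral_sq_mul_exp_neg_sq_sub_div_sq (by positivity)]
  have : √π ≠ 0 := (sqrt_pos.mpr pi_pos).ne'
  field_simp

lemma setIntegral_pos_of_forall_pos {X : Type*} [MeasurableSpace X] {μ : Measure X} {s : Set X}
    {f : X → ℝ} (hs : MeasurableSet s) (hμs : μ s ≠ 0) (hfi : IntegrableOn f s μ)
    (hf : ∀ x ∈ s, 0 < f x) : 0 < ∫ x in s, f x ∂μ := by
  rw [setIntegral_pos_iff_support_of_nonneg_ae
    ((ae_restrict_iff' hs).mpr (ae_of_all _ fun x hx => (hf x hx).le)) hfi]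
  exact (pos_iff_ne_zero.mpr hμs).trans_le (measure_mono fun x hx => ⟨(hf x hx).ne', hx⟩)

section Matern

variable {E : Type*} [NormedAddCommGroup E] [InnerProductSpace ℝ E] [FiniteDimensional ℝ E]
  [MeasurableSpace E] [BorelSpace E] {ι : Type*} [Fintype ι]

theorem sum_mul_one_add_mul_norm_mul_exp_neg_pos {x : ι → E} (hx : Function.Injective x)
    {ε : ℝ} (hε : 0 < ε) {c : ι → ℝ} (hc : c ≠ 0) :
    0 < ∑ i, ∑ j, c i * c j * ((1 + ε * ‖x i - x j‖) * rexp (-(ε * ‖x i - x j‖))) := by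
  set G : ℝ → ℝ := fun v =>
    ∑ i, ∑ j, c i * c j * (v ^ 2 * rexp (-v ^ 2 - (ε * ‖x i - x j‖ / 2 / v) ^ 2))
  have hterm : ∀ i j, IntegrableOn
      (fun v => c i * c j * (v ^ 2 * rexp (-v ^ 2 - (ε * ‖x i - x j‖ / 2 / v) ^ 2))) (Ioi 0) :=
    fun i j => ((integrable_sq_mul_exp_neg_sq_sub_div_sq _).const_mul _).integrableOn
  have hG_int : IntegrableOn G (Ioi 0) :=
    integrable_finsetSum _ fun i _ => integrable_finsetSum _ fun j _ => hterm i j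
  have hG_pos : ∀ v ∈ Ioi (0 : ℝ), 0 < G v := fun v (hv : 0 < v) => by
    have hgauss := sum_mul_exp_neg_mul_sq_norm_sub_pos hx (a := (ε / 2 / v) ^ 2) (by positivity) hc
    have hG : G v = v ^ 2 * rexp (-v ^ 2) *
        ∑ i, ∑ j, c i * c j * rexp (-((ε / 2 / v) ^ 2 * ‖x i - x j‖ ^ 2)) := by
      simp only [G, Finset.mul_sum, sub_eq_add_neg, exp_add]
      refine Finset.sum_congr rfl fun i _ => Finset.sum_congr rfl fun j _ => ?_
      ring_nf
    rw [hG]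
    positivity
  have hQ : ∑ i, ∑ j, c i * c j * ((1 + ε * ‖x i - x j‖) * rexp (-(ε * ‖x i - x j‖)))
      = 4 / √π * ∫ v in Ioi 0, G v := by
    simp_rw [one_add_mul_exp_neg_eq_integral (mul_nonneg hε.le (norm_nonneg _)), G]
    rw [integral_finsetSum _ fun i _ => integrable_finsetSum _ fun j _ => hterm i j]
    simp_rw [integral_finsetSum _ fun j _ => hterm _ j, integral_const_mul, Finset.mul_sum]
    refine Finset.sum_congr rfl fun i _ => Finset.sum_congr rfl fun j _ => by ring
  rw [hQ]
  have := setIntegral_pos_of_forall_pos measurableSet_Ioi (by simp) hG_int hG_pos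
  have : 0 < √π := sqrt_pos.mpr pi_pos
  positivity

end Matern

theorem Matrix.posDef_of_isSymm_of_forall_sum_mul_pos {ι : Type*} [Fintype ι]
    {M : Matrix ι ι ℝ} (hM : M.IsSymm) (h : ∀ c : ι → ℝ, c ≠ 0 → 0 < ∑ i, ∑ j, c i * c j * M i j) :
    M.PosDef := by
  refine Matrix.posDef_iff_dotProduct_mulVec.mpr ⟨isHermitian_iff_isSymm.mpr hM, fun c hc => ?_⟩
  have hquad : star c ⬝ᵥ M.mulVec c = ∑ i, ∑ j, c i * c j * M i j := by
    simp only [dotProduct, mulVec, star_trivial, Finset.mul_sum]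
    exact Finset.sum_congr rfl fun i _ => Finset.sum_congr rfl fun j _ => by ring
  rw [hquad]
  exact h c hc

/-- The Matérn 1 kernel `k(x,x') = (1 + ε‖x-x'‖)·exp(-ε‖x-x'‖)` on `ℝ^d`
is strictly positive definite: for all `N` and pairwise distinct points `x_1, …, x_N`,
the kernel matrix is (symmetric) positive definite. -/
theorem matern1_kernel_strictly_positive_definite
    (ε : ℝ) (hε : 0 < ε) (d N : ℕ)
    (x : Fin N → EuclideanSpace ℝ (Fin d)) (hinj : Function.Injective x) :
    (Matrix.of fun i j =>
      (1 + ε * ‖x i - x j‖) * Real.exp (-(ε * ‖x i - x j‖))).PosDef := by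
  refine Matrix.posDef_of_isSymm_of_forall_sum_mul_pos ?_ fun c hc => ?_
  · exact Matrix.IsSymm.ext fun i j => by simp [norm_sub_rev]
  · simpa using sum_mul_one_add_mul_norm_mul_exp_neg_pos hinj hε hc
end
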